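/- In the free associative unital 𝔽₂-algebra F on generators λ_0, λ_1, λ_2, …, the two-sided ideal generated by the symmetric Adem relations Σ_{i+j=n, i,j ≥ 0} C(i+j, i)·λ_{i−1+m}·λ_{j−1+2m} (one for each m ≥ 1 and n ≥ 0) is equal to the two-sided ideal generated by the admissible Adem relations λ_i·λ_{2i+1+n} + Σ_{j ≥ 0} C(n−j−1, j)·λ_{i+n−j}·λ_{2i+1+j} (one for each i ≥ 0 and n ≥ 0). -/

import Mathlib

/-!
Send `x ^ a * y ^ b` to `λ_a λ_b` by an 𝔽₂-linear map from `𝔽₂[x, y]`. The symmetric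
relation `(m, n)` is then the image of `(x + y) ^ n * x ^ m * y ^ (2m + 1)`, and the
admissible relation `(i, n)` the image of `g_n * x ^ i * y ^ (2i + 1)`, where
`g_n = y ^ n + Σ_j C(n-j-1, j) x ^ (n-j) y ^ j`. In characteristic two, `g_n` satisfies the
recurrence `g_{n+3} = (x + y) g_{n+2} + x y² g_n`, so it equals
`Σ_k C(n-2k, k) (x y²) ^ k (x + y) ^ (n-3k)`. Hence the admissible relation `(i, n)` is the
symmetric relation `(i, n)` plus an 𝔽₂-combination of symmetric relations `(i + k, n - 3k)`
with `k ≥ 1`: the two families are related by a unitriangular change of generators.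
-/

noncomputable section

open Finset

abbrev K2 : Type := ZMod 2

abbrev FA : Type := FreeAlgebra K2 ℕ

/-- The generator λₙ of the free algebra. -/
def lamF (n : ℕ) : FA := FreeAlgebra.ι K2 n

/-- The symmetric Adem relation `Σ_{i+j=n} C(i+j,i) λ_{i-1+m'} λ_{j-1+2m'}`, where the
parameter `m : ℕ` encodes the actual index `m' = m + 1 ≥ 1` (so all subscripts are
genuine natural numbers, and every `m' ≥ 1`, `n ≥ 0` occurs). -/
def symRel (m n : ℕ) : FA :=
  ∑ i ∈ Finset.range (n + 1),
    (Nat.choose n i : K2) • (lamF (i + m) * lamF (n - i + 2 * m + 1))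

/-- The admissible Adem relation
`λ_i λ_{2i+1+n} + Σ_{j ≥ 0} C(n-j-1, j) λ_{i+n-j} λ_{2i+1+j}` for `i, n ≥ 0`.
Since `C(n-j-1, j) = 0` (with the convention that `C(a,b) = 0` unless `0 ≤ b ≤ a`)
whenever `j ≥ n`, the sum may be taken over `0 ≤ j < n`, where all the subscripts and
binomial arguments are genuine natural numbers. -/
def admRel (i n : ℕ) : FA :=
  lamF i * lamF (2 * i + 1 + n) +
    ∑ j ∈ Finset.range n,
      (Nat.choose (n - j - 1) j : K2) • (lamF (i + n - j) * lamF (2 * i + 1 + j))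

theorem Nat.choose_sub_mul_succ (n d k : ℕ) :
    (n + 1 - d * k).choose (k + 1) = (n - d * k).choose (k + 1) + (n - d * k).choose k := by
  by_cases h : d * k ≤ n
  · rw [show n + 1 - d * k = n - d * k + 1 by omega, Nat.choose_succ_succ', add_comm]
  · obtain _ | k := k
    · simp at h
    · simp [show n + 1 - d * (k + 1) = 0 by omega, show n - d * (k + 1) = 0 by omega]

theorem Nat.choose_sub_mul_eq_zero {n d k : ℕ} (h : n < (d + 1) * k) :
    (n - d * k).choose k = 0 := by
  have hk : k ≠ 0 := by rintro rfl; simp at h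
  exact Nat.choose_eq_zero_of_lt (by rw [add_one_mul] at h; omega)

section BinomSeq

variable {R : Type*} [CommSemiring R] (d : ℕ) (a b : R)

def binomTerm (n k : ℕ) : R := ((n - d * k).choose k : R) * (a ^ (n - (d + 1) * k) * b ^ k)

/-- `binomSeq d a b` is the coefficient sequence of `1 / (1 - a t - b t ^ (d + 1))`. -/
def binomSeq (n : ℕ) : R := ∑ k ∈ range (n + 1), binomTerm d a b n k

variable {d} in
theorem binomTerm_eq_zero {n k : ℕ} (h : n < (d + 1) * k) : binomTerm d a b n k = 0 := by
  rw [binomTerm, Nat.choose_sub_mul_eq_zero h, Nat.cast_zero, zero_mul]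

@[simp]
theorem binomTerm_zero_right (n : ℕ) : binomTerm d a b n 0 = a ^ n := by
  simp [binomTerm]

theorem binomTerm_add_succ (n k : ℕ) :
    binomTerm d a b (n + d + 1) (k + 1) =
      a * binomTerm d a b (n + d) (k + 1) + b * binomTerm d a b n k := by
  simp only [binomTerm]
  rw [show n + d + 1 - d * (k + 1) = n + 1 - d * k by rw [mul_add_one]; omega,
    show n + d - d * (k + 1) = n - d * k by rw [mul_add_one]; omega,
    show n + d + 1 - (d + 1) * (k + 1) = n - (d + 1) * k by rw [mul_add_one]; omega,
    Nat.choose_sub_mul_succ]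
  by_cases h : n < (d + 1) * k + 1
  · rw [Nat.choose_eq_zero_of_lt (show n - d * k < k + 1 by rw [add_one_mul] at h; omega)]
    push_cast
    ring
  · rw [show n - (d + 1) * k = n + d - (d + 1) * (k + 1) + 1 by rw [mul_add_one]; omega]
    push_cast
    ring

variable {d} in
theorem binomSeq_eq_sum_range {n N : ℕ} (hN : n < N) :
    binomSeq d a b n = ∑ k ∈ range N, binomTerm d a b n k :=
  sum_subset (range_subset_range.2 hN) fun k _ hk =>
    binomTerm_eq_zero a b (by rw [mem_range] at hk; nlinarith)

variable {d} in
theorem binomSeq_of_le {n : ℕ} (hn : n ≤ d) : binomSeq d a b n = a ^ n := by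
  rw [binomSeq, sum_range_succ', sum_eq_zero fun k _ => binomTerm_eq_zero a b (by nlinarith),
    zero_add, binomTerm_zero_right]

theorem binomSeq_add_succ (n : ℕ) :
    binomSeq d a b (n + d + 1) = a * binomSeq d a b (n + d) + b * binomSeq d a b n := by
  rw [binomSeq, binomSeq_eq_sum_range a b (show n + d < n + d + 2 by omega),
    binomSeq_eq_sum_range a b (show n < n + d + 1 by omega), sum_range_succ' _ (n + d + 1),
    sum_range_succ' _ (n + d + 1), sum_congr rfl fun k _ => binomTerm_add_succ d a b n k,
    sum_add_distrib, mul_add, mul_sum, mul_sum]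
  simp only [binomTerm_zero_right]
  ring

variable {d a b} in
theorem eq_binomSeq {s : ℕ → R} (hinit : ∀ n ≤ d, s n = a ^ n)
    (hrec : ∀ n, s (n + d + 1) = a * s (n + d) + b * s n) : s = binomSeq d a b := by
  funext n
  induction n using Nat.strong_induction_on with
  | _ n ih =>
    by_cases hn : n ≤ d
    · rw [hinit n hn, binomSeq_of_le a b hn]
    · obtain ⟨m, rfl⟩ : ∃ m, n = m + d + 1 := ⟨n - d - 1, by omega⟩
      rw [hrec, binomSeq_add_succ, ih _ (by omega), ih _ (by omega)]

end BinomSeq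

section AdmPoly

variable {R : Type*}

def admPoly [CommSemiring R] (x y : R) (n : ℕ) : R :=
  y ^ n + ∑ j ∈ range n, ((n - j - 1).choose j : R) * (x ^ (n - j) * y ^ j)

@[simp]
theorem admPoly_zero [CommSemiring R] (x y : R) : admPoly x y 0 = 1 := by
  simp [admPoly]

theorem admPoly_succ [CommSemiring R] (x y : R) (n : ℕ) :
    admPoly x y (n + 1) = y ^ (n + 1) + x * binomSeq 1 x (x * y) n := by
  rw [admPoly, binomSeq, mul_sum]
  refine congrArg _ (sum_congr rfl fun j _ => ?_)
  rw [binomTerm, show n + 1 - j - 1 = n - 1 * j by omega, one_mul]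
  by_cases h : j ≤ n - j
  · rw [show n + 1 - j = 1 + (n - (1 + 1) * j) + j by omega, pow_add, pow_add, mul_pow]
    ring
  · rw [Nat.choose_eq_zero_of_lt (by omega)]
    simp

variable [CommRing R] [CharP R 2] (x y : R)

theorem admPoly_add_three (n : ℕ) :
    admPoly x y (n + 3) = (x + y) * admPoly x y (n + 2) + x * y ^ 2 * admPoly x y n := by
  have hrec := binomSeq_add_succ 1 x (x * y)
  obtain _ | n := n
  · have h2 : binomSeq 1 x (x * y) 2 =
        x * binomSeq 1 x (x * y) 1 + x * y * binomSeq 1 x (x * y) 0 := hrec 0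
    have h1 := binomSeq_of_le (d := 1) x (x * y) le_rfl
    have h0 := binomSeq_of_le (d := 1) x (x * y) zero_le_one
    rw [zero_add, admPoly_succ x y 2, admPoly_succ x y 1, admPoly_zero]
    linear_combination
      x * h2 - x * y * h1 + x ^ 2 * y * h0 - x * y ^ 2 * CharTwo.two_eq_zero (R := R)
  · rw [admPoly_succ, admPoly_succ, admPoly_succ]
    linear_combination x * hrec (n + 1) - x * y * hrec n -
      (x * y ^ (n + 3) + x ^ 2 * y ^ 2 * binomSeq 1 x (x * y) n) * CharTwo.two_eq_zero (R := R)

theorem admPoly_eq_binomSeq : admPoly x y = binomSeq 2 (x + y) (x * y ^ 2) := by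
  refine eq_binomSeq (fun n hn => ?_) (admPoly_add_three x y)
  have h0 := binomSeq_of_le (d := 1) x (x * y) zero_le_one
  have h1 := binomSeq_of_le (d := 1) x (x * y) le_rfl
  interval_cases n
  · simp
  · rw [admPoly_succ, h0]
    ring
  · rw [admPoly_succ, h1]
    linear_combination -x * y * CharTwo.two_eq_zero (R := R)

end AdmPoly

open MvPolynomial

def lamPair : MvPolynomial (Fin 2) K2 →ₗ[K2] FA :=
  (basisMonomials (Fin 2) K2).constr K2 fun d => lamF (d 0) * lamF (d 1)

theorem lamPair_monomial (d : Fin 2 →₀ ℕ) :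
    lamPair (monomial d 1) = lamF (d 0) * lamF (d 1) := by
  simpa [lamPair] using
    (basisMonomials (Fin 2) K2).constr_basis K2 (fun d => lamF (d 0) * lamF (d 1)) d

theorem lamPair_X_pow_mul_X_pow (a b : ℕ) :
    lamPair (X 0 ^ a * X 1 ^ b) = lamF a * lamF b := by
  rw [X_pow_eq_monomial, X_pow_eq_monomial, monomial_mul, one_mul, lamPair_monomial]
  simp

theorem lamPair_natCast_mul (c : ℕ) (p : MvPolynomial (Fin 2) K2) :
    lamPair (c * p) = (c : K2) • lamPair p := by
  rw [← nsmul_eq_mul, map_nsmul, Nat.cast_smul_eq_nsmul]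

theorem symRel_eq_lamPair (m n : ℕ) :
    symRel m n = lamPair ((X 0 + X 1) ^ n * (X 0 ^ m * X 1 ^ (2 * m + 1))) := by
  rw [add_pow, sum_mul, map_sum, symRel]
  refine sum_congr rfl fun i _ => ?_
  rw [← lamPair_X_pow_mul_X_pow, ← lamPair_natCast_mul]
  congr 1
  ring

theorem admRel_eq_lamPair (i n : ℕ) :
    admRel i n = lamPair (admPoly (X 0) (X 1) n * (X 0 ^ i * X 1 ^ (2 * i + 1))) := by
  rw [admPoly, add_mul, sum_mul, map_add, map_sum, admRel, ← lamPair_X_pow_mul_X_pow]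
  congr 1
  · congr 1
    ring
  refine sum_congr rfl fun j hj => ?_
  rw [← lamPair_X_pow_mul_X_pow, ← lamPair_natCast_mul,
    show i + n - j = (n - j) + i by rw [mem_range] at hj; omega]
  congr 1
  ring

theorem admRel_eq_sum_symRel (i n : ℕ) :
    admRel i n =
      ∑ k ∈ range (n + 1), ((n - 2 * k).choose k : K2) • symRel (i + k) (n - 3 * k) := by
  rw [admRel_eq_lamPair, admPoly_eq_binomSeq, binomSeq, sum_mul, map_sum]
  refine sum_congr rfl fun k _ => ?_
  rw [symRel_eq_lamPair, binomTerm, ← lamPair_natCast_mul]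
  congr 1
  ring

theorem admRel_mem_span_symRel (i n : ℕ) :
    admRel i n ∈ TwoSidedIdeal.span {x : FA | ∃ m n : ℕ, x = symRel m n} := by
  rw [admRel_eq_sum_symRel]
  refine sum_mem fun k _ => ?_
  rw [Nat.cast_smul_eq_nsmul]
  refine nsmul_mem (TwoSidedIdeal.subset_span ?_) _
  exact ⟨i + k, n - 3 * k, rfl⟩

theorem symRel_mem_span_admRel (m n : ℕ) :
    symRel m n ∈ TwoSidedIdeal.span {x : FA | ∃ i n : ℕ, x = admRel i n} := by
  induction n using Nat.strong_induction_on generalizing m with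
  | _ n ih =>
    have hsym : symRel m n = admRel m n - ∑ k ∈ range n,
        ((n - 2 * (k + 1)).choose (k + 1) : K2) • symRel (m + (k + 1)) (n - 3 * (k + 1)) := by
      rw [eq_sub_iff_add_eq, admRel_eq_sum_symRel, sum_range_succ', add_comm]
      simp
    rw [hsym]
    refine sub_mem (TwoSidedIdeal.subset_span ?_) (sum_mem fun k hk => ?_)
    · exact ⟨m, n, rfl⟩
    rw [Nat.cast_smul_eq_nsmul]
    exact nsmul_mem (ih _ (by rw [mem_range] at hk; omega) _) _

/-- The two-sided ideal generated by the symmetric Adem relations equals the two-sided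
ideal generated by the admissible Adem relations. -/
theorem symmetric_ideal_eq_admissible_ideal :
    TwoSidedIdeal.span {x : FA | ∃ m n : ℕ, x = symRel m n} =
      TwoSidedIdeal.span {x : FA | ∃ i n : ℕ, x = admRel i n} := by
  refine le_antisymm (TwoSidedIdeal.span_le.2 ?_) (TwoSidedIdeal.span_le.2 ?_)
  · rintro _ ⟨m, n, rfl⟩
    exact symRel_mem_span_admRel m n
  · rintro _ ⟨i, n, rfl⟩
    exact admRel_mem_span_symRel i n
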